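/- For every natural number t, the odd-index Fibonacci number f(4t+1) equals u t 0 plus the sum over all even s with 2 ≤ s ≤ 2t of (2^s · u t s + 2^(s-1) · u t (-s)). -/

import Mathlib

/-- One step of the recursion defining `u`: given `u t`, first the values at odd
positions are computed from `u t`, then the values at even positions are computed from
`u t` and the new odd values. -/
def ustep (v : ℤ → ℤ) : ℤ → ℤ := fun s =>
  let w : ℤ → ℤ := fun s' =>
    if s' < 0 then 2 * v (s' - 1) - v s' + v (s' + 1)
    else v (s' - 1) - v s' + 2 * v (s' + 1)
  if s % 2 = 0 then
    if s < 0 then 2 * w (s - 1) - v s + w (s + 1)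
    else w (s - 1) - v s + 2 * w (s + 1)
  else w s

/-- The doubly infinite sequences `u t : ℤ → ℤ`: `u 0` is the indicator function of
`{0, -1}`, and `u (t+1)` is obtained from `u t` by the two-step reflection rule. -/
def u : ℕ → ℤ → ℤ
  | 0 => fun s => if s = 0 ∨ s = -1 then 1 else 0
  | t + 1 => ustep (u t)

/-!
Weight position `s` of a sequence by `2 ^ s` for `s ≥ 0` and by `2 ^ (-s - 1)` for `s < 0`, and
let `A t`, `B t` be the weighted sums of `u t` over the even and over the odd positions. Each half
of a step of `u` is a reflection `reflect x y`, whose transpose sends these weights, restricted to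
one parity class, to three times the weights on the other class (`weight_transpose`). Hence
`B (t + 1) = 3 A t - B t` and `A (t + 1) = 3 B (t + 1) - A t`: the recursion
`F (n + 2) = 3 F n - F (n - 2)` of every other Fibonacci number. With `A 0 = B 0 = 1 = f 1 = f (-1)`
this gives `A t = f (4 t + 1)`, and `A t` is the right-hand side.
-/

open Function

lemma add_two_eq_three_mul_sub {f : ℤ → ℤ} (hrec : ∀ n : ℤ, f (n + 1) = f n + f (n - 1))
    (n : ℤ) : f (n + 2) = 3 * f n - f (n - 2) := by
  have h₁ := hrec (n + 1)
  have h₂ := hrec n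
  have h₃ := hrec (n - 1)
  rw [add_assoc, one_add_one_eq_two, add_sub_cancel_right] at h₁
  rw [sub_add_cancel, sub_sub, one_add_one_eq_two] at h₃
  linarith

lemma finsum_int_eq_add_sum_natAbs {M : Type*} [AddCommMonoid M] {g : ℤ → M} {F : Finset ℕ}
    (hF : 0 ∉ F) (hg : ∀ s, g s ≠ 0 → s = 0 ∨ s.natAbs ∈ F) :
    ∑ᶠ s, g s = g 0 + ∑ n ∈ F, (g n + g (-n)) := by
  classical
  have hdisj : Disjoint (F.image ((↑) : ℕ → ℤ)) (F.image fun n : ℕ => -(n : ℤ)) := by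
    simp only [Finset.disjoint_left, Finset.mem_image]
    rintro _ ⟨m, hm, rfl⟩ ⟨n, hn, h⟩
    obtain rfl : m = 0 := by omega
    exact hF hm
  rw [finsum_eq_finsetSum_of_support_subset (s := insert 0 (F.image (↑) ∪ F.image (-↑·))),
    Finset.sum_insert, Finset.sum_union hdisj, Finset.sum_image, Finset.sum_image,
    Finset.sum_add_distrib]
  · exact fun _ _ _ _ h => by omega
  · exact fun _ _ _ _ h => by omega
  · simp only [Finset.mem_union, Finset.mem_image]
    rintro (⟨n, hn, h⟩ | ⟨n, hn, h⟩) <;> obtain rfl : n = 0 := by omega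
    all_goals exact hF hn
  · intro s hs
    rcases hg s hs with rfl | h
    · simp
    · simp only [Finset.coe_insert, Finset.coe_union, Finset.coe_image, Set.mem_insert_iff,
        Set.mem_union, Set.mem_image, Finset.mem_coe]
      rcases Int.natAbs_eq s with h' | h'
      · exact .inr (.inl ⟨_, h, h'.symm⟩)
      · exact .inr (.inr ⟨_, h, h'.symm⟩)

def reflect (x y : ℤ → ℤ) (s : ℤ) : ℤ :=
  if s < 0 then 2 * x (s - 1) - y s + x (s + 1) else x (s - 1) - y s + 2 * x (s + 1)

lemma ustep_eq (v : ℤ → ℤ) (s : ℤ) :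
    ustep v s = if Even s then reflect (reflect v v) v s else reflect v v s := by
  simp only [ustep, reflect, Int.even_iff]

lemma reflect_eq_zero {x y : ℤ → ℤ} {s : ℤ} (h₁ : x (s - 1) = 0) (h₂ : y s = 0)
    (h₃ : x (s + 1) = 0) : reflect x y s = 0 := by
  simp [reflect, h₁, h₂, h₃]

lemma Function.HasFiniteSupport.reflect {x y : ℤ → ℤ} (hx : x.HasFiniteSupport)
    (hy : y.HasFiniteSupport) : (reflect x y).HasFiniteSupport := by
  have hx₁ := hx.fun_comp_of_injective (add_left_injective (-1 : ℤ))
  have hx₂ := hx.fun_comp_of_injective (add_left_injective (1 : ℤ))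
  refine ((hx₁.union hy).union hx₂).subset fun s hs => ?_
  contrapose! hs
  simp only [Set.mem_union, mem_support, not_or, not_not, ← sub_eq_add_neg] at hs
  exact notMem_support.mpr (reflect_eq_zero hs.1.1 hs.1.2 hs.2)

def weight : ℤ → ℤ
  | .ofNat n => 2 ^ n
  | .negSucc n => 2 ^ n

lemma weight_natCast (n : ℕ) : weight n = 2 ^ n := rfl

lemma weight_neg_sub_one (n : ℕ) : weight (-n - 1) = 2 ^ n := by
  rw [show -(n : ℤ) - 1 = .negSucc n by omega]
  rfl

lemma weight_neg (n : ℕ) (hn : 1 ≤ n) : weight (-n) = 2 ^ (n - 1) := by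
  rw [← weight_neg_sub_one, Nat.cast_sub hn]
  ring_nf

lemma weight_transpose (r : ℤ) :
    weight (r + 1) * (if r + 1 < 0 then 2 else 1) + weight (r - 1) * (if r - 1 < 0 then 1 else 2)
      = 3 * weight r := by
  rcases le_or_gt 0 r with hr | hr
  · lift r to ℕ using hr
    rcases r with _ | m
    · decide
    · rw [show ((m + 1 : ℕ) : ℤ) + 1 = (m + 2 : ℕ) by push_cast; ring,
        show ((m + 1 : ℕ) : ℤ) - 1 = m by push_cast; ring, weight_natCast, weight_natCast,
        weight_natCast, if_neg (by omega), if_neg (by omega)]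
      ring
  · obtain ⟨n, rfl⟩ : ∃ n : ℕ, r = -n - 1 := ⟨(-r - 1).toNat, by omega⟩
    rcases n with _ | m
    · decide
    · rw [show -((m + 1 : ℕ) : ℤ) - 1 + 1 = -m - 1 by push_cast; ring,
        show -((m + 1 : ℕ) : ℤ) - 1 - 1 = -(m + 2 : ℕ) - 1 by push_cast; ring,
        weight_neg_sub_one, weight_neg_sub_one, weight_neg_sub_one, if_pos (by omega),
        if_pos (by omega)]
      ring

def parityWeight (k s : ℤ) : ℤ := if Even (s + k) then weight s else 0

lemma parityWeight_transpose (k r : ℤ) :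
    parityWeight k (r + 1) * (if r + 1 < 0 then 2 else 1)
      + parityWeight k (r - 1) * (if r - 1 < 0 then 1 else 2) = 3 * parityWeight (k + 1) r := by
  have h₁ : Even (r + 1 + k) ↔ Even (r + (k + 1)) := by rw [add_right_comm, add_assoc]
  have h₂ : Even (r - 1 + k) ↔ Even (r + (k + 1)) := by
    rw [show r + (k + 1) = r - 1 + k + 2 by ring]
    simp [parity_simps]
  by_cases h : Even (r + (k + 1))
  · simpa only [parityWeight, h₁, h₂, h, if_true] using weight_transpose r
  · simp only [parityWeight, h₁, h₂, h, if_false, zero_mul, add_zero, mul_zero]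

noncomputable def paritySum (k : ℤ) (x : ℤ → ℤ) : ℤ := ∑ᶠ s, parityWeight k s * x s

lemma paritySum_add_two (k : ℤ) : paritySum (k + 2) = paritySum k := by
  funext x
  simp [paritySum, parityWeight, ← add_assoc, parity_simps]

lemma paritySum_reflect (k : ℤ) {x y : ℤ → ℤ} (hx : x.HasFiniteSupport)
    (hy : y.HasFiniteSupport) :
    paritySum k (reflect x y) = 3 * paritySum (k + 1) x - paritySum k y := by
  set a : ℤ → ℤ := fun s => if s < 0 then 2 else 1
  set b : ℤ → ℤ := fun s => if s < 0 then 1 else 2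
  have ha := ((hx.fun_comp_of_injective (sub_left_injective (b := 1))).fun_mul_right a)
    |>.fun_mul_right (parityWeight k)
  have hb := ((hx.fun_comp_of_injective (add_left_injective 1)).fun_mul_right b)
    |>.fun_mul_right (parityWeight k)
  have hleft : ∑ᶠ s, parityWeight k s * (a s * x (s - 1))
      = ∑ᶠ r, parityWeight k (r + 1) * a (r + 1) * x r := by
    rw [← finsum_comp_equiv (Equiv.addRight 1)]
    simp [mul_assoc]
  have hright : ∑ᶠ s, parityWeight k s * (b s * x (s + 1))
      = ∑ᶠ r, parityWeight k (r - 1) * b (r - 1) * x r := by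
    rw [← finsum_comp_equiv (Equiv.subRight 1)]
    simp [mul_assoc]
  calc paritySum k (reflect x y)
      = ∑ᶠ s, (parityWeight k s * (a s * x (s - 1)) + parityWeight k s * (b s * x (s + 1))
          - parityWeight k s * y s) := by
        refine finsum_congr fun s => ?_
        simp only [reflect, a, b]
        split_ifs <;> ring
    _ = ∑ᶠ r, (parityWeight k (r + 1) * a (r + 1) + parityWeight k (r - 1) * b (r - 1)) * x r
          - paritySum k y := by
        rw [finsum_sub_distrib (ha.fun_add hb) (hy.fun_mul_right _), finsum_add_distrib ha hb,
          hleft, hright, ← finsum_add_distrib (hx.fun_mul_right _) (hx.fun_mul_right _)]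
        simp only [add_mul, paritySum]
    _ = 3 * paritySum (k + 1) x - paritySum k y := by
        simp only [a, b, parityWeight_transpose, paritySum, mul_finsum, mul_assoc]

lemma paritySum_zero_ustep (v : ℤ → ℤ) :
    paritySum 0 (ustep v) = paritySum 0 (reflect (reflect v v) v) := by
  refine finsum_congr fun s => ?_
  by_cases hs : Even s <;> simp [parityWeight, ustep_eq, hs]

lemma paritySum_one_ustep (v : ℤ → ℤ) :
    paritySum 1 (ustep v) = paritySum 1 (reflect v v) := by
  refine finsum_congr fun s => ?_
  by_cases hs : Even s <;> simp [parityWeight, ustep_eq, hs, ← Int.not_even_iff_odd]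

lemma u_eq_zero_of_lt_abs {t : ℕ} {s : ℤ} (hs : 2 * t + 1 < |s|) : u t s = 0 := by
  induction t generalizing s with
  | zero =>
    rw [lt_abs] at hs
    simp [u]
    omega
  | succ t ih =>
    rw [lt_abs] at hs
    push_cast at hs
    have hv : ∀ r, s - 2 ≤ r → r ≤ s + 2 → u t r = 0 := fun r _ _ =>
      ih (lt_abs.mpr (by omega))
    have hw : ∀ r, s - 1 ≤ r → r ≤ s + 1 → reflect (u t) (u t) r = 0 := fun r _ _ =>
      reflect_eq_zero (hv _ (by omega) (by omega)) (hv _ (by omega) (by omega))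
        (hv _ (by omega) (by omega))
    change ustep (u t) s = 0
    rw [ustep_eq]
    split_ifs
    · exact reflect_eq_zero (hw _ (by omega) (by omega)) (hv _ (by omega) (by omega))
        (hw _ (by omega) (by omega))
    · exact hw _ (by omega) (by omega)

lemma hasFiniteSupport_u (t : ℕ) : (u t).HasFiniteSupport := by
  refine (Set.finite_Icc (-(2 * t + 1) : ℤ) (2 * t + 1)).subset fun s hs => ?_
  by_contra h
  exact hs (u_eq_zero_of_lt_abs (lt_abs.mpr (by simp only [Set.mem_Icc] at h; omega)))

lemma paritySum_one_u_succ (t : ℕ) :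
    paritySum 1 (u (t + 1)) = 3 * paritySum 0 (u t) - paritySum 1 (u t) := by
  rw [u, paritySum_one_ustep, paritySum_reflect _ (hasFiniteSupport_u t) (hasFiniteSupport_u t),
    one_add_one_eq_two, ← zero_add 2, paritySum_add_two]

lemma paritySum_zero_u_succ (t : ℕ) :
    paritySum 0 (u (t + 1)) = 3 * paritySum 1 (u (t + 1)) - paritySum 0 (u t) := by
  have hw := (hasFiniteSupport_u t).reflect (hasFiniteSupport_u t)
  rw [u, paritySum_zero_ustep, paritySum_reflect _ hw (hasFiniteSupport_u t),
    paritySum_one_ustep, zero_add]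

lemma paritySum_u_zero (k : ℤ) : paritySum k (u 0) = parityWeight k 0 + parityWeight k (-1) := by
  rw [paritySum, finsum_eq_finsetSum_of_support_subset (s := {0, -1})]
  · simp [u]
  · intro s hs
    by_contra h
    simp_all [u]

lemma paritySum_u_eq {f : ℤ → ℤ} (h0 : f 0 = 0) (h1 : f 1 = 1)
    (hrec : ∀ n : ℤ, f (n + 1) = f n + f (n - 1)) (t : ℕ) :
    paritySum 1 (u t) = f (4 * t - 1) ∧ paritySum 0 (u t) = f (4 * t + 1) := by
  induction t with
  | zero =>
    have hf : f (-1) = 1 := by simpa [h0, h1] using (hrec 0).symm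
    simp only [paritySum_u_zero, Nat.cast_zero, mul_zero, zero_sub, zero_add, h1, hf]
    decide
  | succ t ih =>
    have h₁ := add_two_eq_three_mul_sub hrec (4 * t + 1)
    have h₃ := add_two_eq_three_mul_sub hrec (4 * t + 3)
    rw [paritySum_zero_u_succ, paritySum_one_u_succ, ih.1, ih.2]
    push_cast
    ring_nf at h₁ h₃ ⊢
    constructor <;> linarith

lemma paritySum_zero_u (t : ℕ) :
    paritySum 0 (u t) = u t 0 + ∑ s ∈ (Finset.Icc 2 (2 * t)).filter (fun s => Even s),
      (2 ^ s * u t (s : ℤ) + 2 ^ (s - 1) * u t (-(s : ℤ))) := by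
  rw [paritySum, finsum_int_eq_add_sum_natAbs (F := (Finset.Icc 2 (2 * t)).filter Even)]
  · refine congrArg₂ _ (by simp [parityWeight, show weight 0 = 1 from rfl])
      (Finset.sum_congr rfl fun n hn => ?_)
    simp only [Finset.mem_filter, Finset.mem_Icc] at hn
    simp [parityWeight, weight_natCast, weight_neg n (by omega), hn.2]
  · simp
  · intro s hs
    have he : Even s := by by_contra h; simp [parityWeight, h] at hs
    have hu : |s| ≤ 2 * t + 1 := by
      by_contra h
      simp [u_eq_zero_of_lt_abs (not_le.mp h)] at hs
    rw [abs_le] at hu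
    simp only [Finset.mem_filter, Finset.mem_Icc, Int.natAbs_even, he, and_true]
    obtain ⟨k, rfl⟩ := he
    omega

/-- The partition formula for the odd-index Fibonacci number `f (4t+1)`:
`f (4t+1) = u t 0 + Σ_{s even, 2 ≤ s ≤ 2t} (2^s · u t s + 2^(s-1) · u t (-s))`,
where `f` is the extended Fibonacci sequence. -/
theorem fib_partition_4t_add_one (f : ℤ → ℤ) (h0 : f 0 = 0) (h1 : f 1 = 1)
    (hrec : ∀ n : ℤ, f (n + 1) = f n + f (n - 1)) (t : ℕ) :
    f (4 * (t : ℤ) + 1) =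
      u t 0 + ∑ s ∈ (Finset.Icc 2 (2 * t)).filter (fun s => Even s),
        (2 ^ s * u t (s : ℤ) + 2 ^ (s - 1) * u t (-(s : ℤ))) := by
  rw [← (paritySum_u_eq h0 h1 hrec t).2, paritySum_zero_u]
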